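/- arXiv:0901.2457 — 9 statements merged into one kernel-verified Lean document; each statement's English description precedes it below -/
import Mathlib

section
/- The set I = {X_0^2, X_1^2, X_2^2, X_0 X_1, X_0 X_2} of five degree-2 monomials in K[X_0,X_1,X_2] generates an m-primary ideal and satisfies, for every subset J ⊆ I with k = |J| ≥ 2, the weak inequality (2 - d_J)·5 + d_J - 2·k ≥ 0, where d_J is the degree of gcd(J). Hence the associated syzygy bundle E_{2,5} is semistable. -/
/-- The set `I = {X_0^2, X_1^2, X_2^2, X_0X_1, X_0X_2}` (as exponent vectors) contains a
pure power of each variable (so generates an m-primary ideal), and every subset `J` with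
`|J| ≥ 2` satisfies `(2 - d_J)·5 + d_J - 2·|J| ≥ 0`; hence `E_{2,5}` is semistable. -/
theorem stmt6 :
    (∀ i : Fin 3,
      ∃ v ∈ ({![2, 0, 0], ![0, 2, 0], ![0, 0, 2], ![1, 1, 0], ![1, 0, 1]} :
          Finset (Fin 3 → ℕ)), ∀ j, j ≠ i → v j = 0) ∧
    ∀ J ⊆ ({![2, 0, 0], ![0, 2, 0], ![0, 0, 2], ![1, 1, 0], ![1, 0, 1]} :
        Finset (Fin 3 → ℕ)),
      ∀ hJ : 2 ≤ J.card,
      0 ≤ (2 - ((∑ i : Fin 3, J.inf' (Finset.card_pos.mp (by omega)) fun v => v i : ℕ) : ℤ)) * 5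
            + ((∑ i : Fin 3, J.inf' (Finset.card_pos.mp (by omega)) fun v => v i : ℕ) : ℤ)
            - 2 * (J.card : ℤ) := by
  constructor
  · intro i
    fin_cases i
    · exact ⟨![2,0,0], by decide, by decide⟩
    · exact ⟨![0,2,0], by decide, by decide⟩
    · exact ⟨![0,0,2], by decide, by decide⟩
  · intro J hJ
    rw [← Finset.mem_powerset] at hJ
    revert hJ
    revert J
    decide
end

section
/- Let d ≥ 1 and n = d + 2 + i with 1 ≤ i ≤ d - 2 (so d ≥ 3). For any integer d_J with 0 < d_J < d, set e = max(i, d_J - 1) and k = d - 2·d_J + e + 2. Then (d - d_J)·n + d_J - d·k = i·(d - d_J) + d·d_J - d_J - d·e > 0. -/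
/-- Let `d ≥ 3`, `n = d + 2 + i` with `1 ≤ i ≤ d - 2`, `0 < d_J < d`,
`e = max i (d_J - 1)` and `k = d - 2·d_J + e + 2`. Then
`(d - d_J)·n + d_J - d·k = i·(d - d_J) + d·d_J - d_J - d·e > 0`. -/
theorem stmt7 (d i n dJ e k : ℤ) (hd : 3 ≤ d) (hi1 : 1 ≤ i) (hi2 : i ≤ d - 2)
    (hn : n = d + 2 + i) (h1 : 0 < dJ) (h2 : dJ < d)
    (he : e = max i (dJ - 1)) (hk : k = d - 2 * dJ + e + 2) :
    (d - dJ) * n + dJ - d * k = i * (d - dJ) + d * dJ - dJ - d * e ∧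
    0 < i * (d - dJ) + d * dJ - dJ - d * e := by
  constructor
  · subst hn hk; ring
  · rcases max_cases i (dJ - 1) with ⟨h, h'⟩ | ⟨h, h'⟩ <;> subst he <;> nlinarith
end

section
/- Let j ≥ 1, d > 3j, and n = 3dj - 9j(j-1)/2 + i with 1 ≤ i ≤ d - 3j + 1. For any integer d_J with 0 < d_J < j, setting k = binomial(d - d_J + 2, 2) - binomial(d - 3j + 2, 2) + i, one has (d - d_J)·n + d_J - d·k = (d-3j)²·d_J + 3(d-3j)(j-d_J)·d_J + (5/2)(d-3j)·d_J² + (9/2)·j·(j-d_J)·d_J + 3j·d_J² + (1/2)(d-3j)·d_J + (d-3j+1-i)·d_J > 0. -/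
/-- Case 1 (small `d_J`) of stability for `3d < n ≤ (d+2 choose 2)`: with `j ≥ 1`,
`d > 3j`, `n = 3dj - 9j(j-1)/2 + i`, `1 ≤ i ≤ d - 3j + 1`, `0 < d_J < j`, and
`k = (d-d_J+2 choose 2) - (d-3j+2 choose 2) + i`, the displayed identity and positivity hold. -/
theorem stmt10 (j d i n dJ k : ℕ) (hj : 1 ≤ j) (hd : 3 * j < d)
    (hi1 : 1 ≤ i) (hi2 : i ≤ d - 3 * j + 1)
    (hn : n = 3 * d * j - 9 * (j * (j - 1) / 2) + i)
    (h1 : 0 < dJ) (h2 : dJ < j)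
    (hk : k = (d - dJ + 2).choose 2 - (d - 3 * j + 2).choose 2 + i) :
    ((d : ℚ) - dJ) * n + dJ - d * k
      = ((d : ℚ) - 3 * j) ^ 2 * dJ
        + 3 * ((d : ℚ) - 3 * j) * ((j : ℚ) - dJ) * dJ
        + (5 / 2) * ((d : ℚ) - 3 * j) * (dJ : ℚ) ^ 2
        + (9 / 2) * (j : ℚ) * ((j : ℚ) - dJ) * dJ
        + 3 * (j : ℚ) * (dJ : ℚ) ^ 2
        + (1 / 2) * ((d : ℚ) - 3 * j) * dJ
        + ((d : ℚ) - 3 * j + 1 - i) * dJ ∧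
    0 < ((d : ℚ) - dJ) * n + dJ - d * k := by
  -- divisibility for the triangular number
  have hdvd : 2 ∣ j * (j - 1) := by
    rcases Nat.even_or_odd j with h | h
    · exact Dvd.dvd.mul_right h.two_dvd _
    · exact Dvd.dvd.mul_left (Nat.Odd.sub_odd h odd_one).two_dvd _
  have hle : 9 * (j * (j - 1) / 2) ≤ 3 * d * j := by
    have h1 : j * (j - 1) / 2 ≤ j * j := le_trans (Nat.div_le_self _ _)
      (Nat.mul_le_mul_left _ (Nat.sub_le _ _))
    nlinarith [Nat.mul_le_mul_right j (le_of_lt hd)]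
  have hq0 : ((j * (j - 1) / 2 : ℕ) : ℚ) = (j : ℚ) * ((j : ℚ) - 1) / 2 := by
    rw [Nat.cast_div hdvd (by norm_num), Nat.cast_mul, Nat.cast_sub hj]
    norm_num
  have hn' : (n : ℚ) = 3 * d * j - 9 * ((j : ℚ) * ((j : ℚ) - 1) / 2) + i := by
    rw [hn]
    push_cast [Nat.cast_sub hle, hq0]
    ring
  have hcle : (d - 3 * j + 2).choose 2 ≤ (d - dJ + 2).choose 2 := by
    apply Nat.choose_le_choose
    omega
  have hk' : (k : ℚ) = ((d : ℚ) - dJ + 2) * ((d : ℚ) - dJ + 1) / 2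
      - ((d : ℚ) - 3 * j + 2) * ((d : ℚ) - 3 * j + 1) / 2 + i := by
    rw [hk]
    have e1 : (((d - dJ + 2).choose 2 : ℕ) : ℚ)
        = ((d : ℚ) - dJ + 2) * ((d : ℚ) - dJ + 1) / 2 := by
      rw [Nat.cast_choose_two]
      push_cast [Nat.cast_sub (show dJ ≤ d by omega)]
      ring_nf
    have e2 : (((d - 3 * j + 2).choose 2 : ℕ) : ℚ)
        = ((d : ℚ) - 3 * j + 2) * ((d : ℚ) - 3 * j + 1) / 2 := by
      rw [Nat.cast_choose_two]
      push_cast [Nat.cast_sub (show 3 * j ≤ d by omega)]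
      ring_nf
    rw [Nat.cast_add, Nat.cast_sub hcle, e1, e2]
  have key : ((d : ℚ) - dJ) * n + dJ - d * k
      = ((d : ℚ) - 3 * j) ^ 2 * dJ
        + 3 * ((d : ℚ) - 3 * j) * ((j : ℚ) - dJ) * dJ
        + (5 / 2) * ((d : ℚ) - 3 * j) * (dJ : ℚ) ^ 2
        + (9 / 2) * (j : ℚ) * ((j : ℚ) - dJ) * dJ
        + 3 * (j : ℚ) * (dJ : ℚ) ^ 2
        + (1 / 2) * ((d : ℚ) - 3 * j) * dJ
        + ((d : ℚ) - 3 * j + 1 - i) * dJ := by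
    rw [hn', hk']
    ring
  refine ⟨key, ?_⟩
  rw [key]
  have hD : (1 : ℚ) ≤ (d : ℚ) - 3 * j := by
    have : (3 * j + 1 : ℕ) ≤ d := hd
    have := Nat.cast_le (α := ℚ).2 this
    push_cast at this; linarith
  have hB : (1 : ℚ) ≤ (j : ℚ) - dJ := by
    have : (dJ + 1 : ℕ) ≤ j := h2
    have := Nat.cast_le (α := ℚ).2 this
    push_cast at this; linarith
  have hJ : (1 : ℚ) ≤ (dJ : ℚ) := by exact_mod_cast h1
  have hI : (i : ℚ) ≤ (d : ℚ) - 3 * j + 1 := by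
    have := Nat.cast_le (α := ℚ).2 hi2
    push_cast [Nat.cast_sub (show 3 * j ≤ d by omega)] at this
    linarith
  nlinarith [hD, hB, hJ, hI, sq_nonneg ((d:ℚ) - 3*j), sq_nonneg (dJ:ℚ)]
end

section
/- Let j ≥ 3, m ≥ 3, 0 ≤ t < j+1, d = m(j+1) + t, and n = binomial(j+3, 2) (the (j+2)nd triangular number). Define i_1 = m + min(1, t). If 0 < d_J ≤ i_1 and k = binomial(j+2, 2), then (d - d_J)·n + d_J - d·k = d(j+2) - d_J·binomial(j+3,2) + d_J > 0. -/
/-- Case 1 of the proof for `n = T_{j+2}`: with `j ≥ 3`, `m ≥ 3`, `0 ≤ t < j+1`,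
`d = m(j+1)+t`, `n = (j+3 choose 2)`, `i_1 = m + min 1 t`, `0 < d_J ≤ i_1`, and
`k = (j+2 choose 2)`, one has
`(d - d_J)·n + d_J - d·k = d(j+2) - d_J·(j+3 choose 2) + d_J > 0`. -/
theorem stmt11 (j m t d n dJ k : ℕ) (hj : 3 ≤ j) (hm : 3 ≤ m) (ht : t < j + 1)
    (hd : d = m * (j + 1) + t) (hn : n = (j + 3).choose 2)
    (h1 : 0 < dJ) (h2 : dJ ≤ m + min 1 t) (hk : k = (j + 2).choose 2) :
    ((d : ℤ) - dJ) * n + dJ - d * k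
      = (d : ℤ) * ((j : ℤ) + 2) - (dJ : ℤ) * (((j + 3).choose 2 : ℕ) : ℤ) + dJ ∧
    0 < (d : ℤ) * ((j : ℤ) + 2) - (dJ : ℤ) * (((j + 3).choose 2 : ℕ) : ℤ) + (dJ : ℤ) := by
  have hN : (j + 3).choose 2 * 2 = (j + 3) * (j + 2) := by
    rw [Nat.choose_two_right]
    have h1 : j + 3 - 1 = j + 2 := rfl
    rw [h1, mul_comm (j + 3) (j + 2),
      Nat.div_mul_cancel (Nat.even_mul_succ_self (j + 2)).two_dvd, mul_comm]
  have hK : (j + 2).choose 2 * 2 = (j + 2) * (j + 1) := by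
    rw [Nat.choose_two_right]
    have h1 : j + 2 - 1 = j + 1 := rfl
    rw [h1, mul_comm (j + 2) (j + 1),
      Nat.div_mul_cancel (Nat.even_mul_succ_self (j + 1)).two_dvd, mul_comm]
  have hNZ : ((j + 3).choose 2 : ℤ) * 2 = ((j : ℤ) + 3) * ((j : ℤ) + 2) := by
    exact_mod_cast congrArg (Nat.cast : ℕ → ℤ) hN
  have hKZ : ((j + 2).choose 2 : ℤ) * 2 = ((j : ℤ) + 2) * ((j : ℤ) + 1) := by
    exact_mod_cast congrArg (Nat.cast : ℕ → ℤ) hK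
  have hNK2 : ((j + 3).choose 2 : ℤ) * 2 = ((j + 2).choose 2 : ℤ) * 2 + ((j : ℤ) + 2) * 2 := by
    linear_combination hNZ - hKZ
  have hNKZ : ((j + 3).choose 2 : ℤ) = ((j + 2).choose 2 : ℤ) + ((j : ℤ) + 2) := by
    omega
  subst hd hn hk
  have hmZ : (3 : ℤ) ≤ (m : ℤ) := by exact_mod_cast hm
  have hjZ : (3 : ℤ) ≤ (j : ℤ) := by exact_mod_cast hj
  have h1Z : (0 : ℤ) < (dJ : ℤ) := by exact_mod_cast h1
  have hC : (dJ : ℤ) * (((j + 3).choose 2 : ℕ) : ℤ) * 2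
      = (dJ : ℤ) * (((j : ℤ) + 3) * ((j : ℤ) + 2)) := by
    rw [mul_assoc, hNZ]
  have hPnn : (0 : ℤ) ≤ ((j : ℤ) + 3) * ((j : ℤ) + 2) := by positivity
  have hQnn : (0 : ℤ) ≤ ((j : ℤ) + 2) * ((j : ℤ) - 1) :=
    mul_nonneg (by linarith) (by linarith)
  constructor
  · push_cast
    linear_combination ((m : ℤ) * ((j : ℤ) + 1) + (t : ℤ)) * hNKZ
  · rcases Nat.eq_zero_or_pos t with h0 | hpos
    · subst h0
      have h2Z : (dJ : ℤ) ≤ (m : ℤ) := by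
        have : dJ ≤ m := by simpa using h2
        exact_mod_cast this
      have hA := mul_le_mul_of_nonneg_right h2Z hPnn
      have hB := mul_le_mul_of_nonneg_right hmZ hQnn
      push_cast
      linarith [hA, hB, hC, h1Z]
    · have h2Z : (dJ : ℤ) ≤ (m : ℤ) + 1 := by
        have : dJ ≤ m + 1 := by omega
        exact_mod_cast this
      have htZ' : (1 : ℤ) ≤ (t : ℤ) := by exact_mod_cast hpos
      have hA := mul_le_mul_of_nonneg_right h2Z hPnn
      have hB := mul_le_mul_of_nonneg_right hmZ hQnn
      have hD : (0 : ℤ) ≤ ((j : ℤ) + 2) * (2 * (j : ℤ) - 4) :=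
        mul_nonneg (by linarith) (by linarith)
      have hE := mul_le_mul_of_nonneg_right htZ' (show (0:ℤ) ≤ (j:ℤ) + 2 by linarith)
      push_cast
      linarith [hA, hB, hC, hD, hE, h1Z]
end

section
/- Let j ≥ 3, m ≥ 3, 0 ≤ t < j+1, d = m(j+1)+t, n = binomial(j+3,2), and for 1 ≤ l ≤ j-1 set i_l = l·m + min(l,t) and i_{l+1} = (l+1)·m + min(l+1,t). If i_l < d_J ≤ i_{l+1} and k = binomial(j+2-l, 2), then (d - d_J)·n + d_J - d·k ≥ d·(binomial(j+3,2) - binomial(j+2-l,2)) - i_{l+1}·binomial(j+3,2) + i_{l+1} > 0. -/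
lemma two_choose_two (a : ℕ) : 2 * (a + 1).choose 2 = (a + 1) * a := by
  rw [Nat.choose_two_right]
  simp only [Nat.add_sub_cancel]
  rw [Nat.mul_div_cancel' (by rw [mul_comm]; exact (Nat.even_mul_succ_self a).two_dvd)]

/-- Key integer inequality: with `J = L + A`,
`0 < (M(J+1)+T)·((J+3)(J+2)-(A+2)(A+1)) - ((L+1)M+S)·((J+3)(J+2)-2)`. -/
lemma key_pos (L A M T S : ℤ) (hL : 1 ≤ L) (hA : 1 ≤ A) (hM : 3 ≤ M)
    (hT : 0 ≤ T) (hS1 : S ≤ L + 1) (hS2 : S ≤ T) :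
    0 < (M * (L + A + 1) + T) * ((L + A + 3) * (L + A + 2) - (A + 2) * (A + 1))
        - ((L + 1) * M + S) * ((L + A + 3) * (L + A + 2) - 2) := by
  -- Halve: prove positivity of F = M(J+1)(L+1)A + T·C - S(J+1)(J+4), C = (J+1)(J+4)-A(A+3)
  have hC : 0 ≤ L ^ 2 + 2 * A * L + 5 * L + 2 * A + 4 := by nlinarith
  rcases le_total (L + 1) T with hcase | hcase
  · nlinarith [mul_nonneg (by linarith : (0:ℤ) ≤ L + 1 - S)
        (by nlinarith : (0:ℤ) ≤ (L + A + 1) * (L + A + 4)),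
      mul_nonneg (by linarith : (0:ℤ) ≤ T - (L + 1)) hC,
      mul_nonneg (by linarith : (0:ℤ) ≤ M - 3)
        (by nlinarith : (0:ℤ) ≤ (L + A + 1) * (L + 1) * A),
      mul_pos (mul_pos (by linarith : (0:ℤ) < L + 1) hA)
        (by linarith : (0:ℤ) < 3 * L + 2 * A)]
  · nlinarith [mul_nonneg (by linarith : (0:ℤ) ≤ T - S)
        (by nlinarith : (0:ℤ) ≤ (L + A + 1) * (L + A + 4)),
      mul_nonneg (by linarith : (0:ℤ) ≤ L + 1 - T)
        (by nlinarith : (0:ℤ) ≤ A * (A + 3)),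
      mul_nonneg (by linarith : (0:ℤ) ≤ M - 3)
        (by nlinarith : (0:ℤ) ≤ (L + A + 1) * (L + 1) * A),
      mul_pos (mul_pos (by linarith : (0:ℤ) < L + 1) hA)
        (by linarith : (0:ℤ) < 3 * L + 2 * A)]

/-- Case 1 of the proof for `n = T_{j+2}`, middle range: with `j ≥ 3`, `m ≥ 3`,
`0 ≤ t ≤ j`, `d = m(j+1)+t`, `n = (j+3 choose 2)`, `1 ≤ l ≤ j-1`,
`i_l < d_J ≤ i_{l+1}` where `i_l = l·m + min l t`, and `k = (j+2-l choose 2)`, one has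
`(d-d_J)·n + d_J - d·k ≥ d·((j+3 choose 2) - (j+2-l choose 2)) - i_{l+1}·(j+3 choose 2) + i_{l+1} > 0`. -/
theorem stmt12 (j m t d n l dJ k : ℕ) (hj : 3 ≤ j) (hm : 3 ≤ m) (ht : t ≤ j)
    (hd : d = m * (j + 1) + t) (hn : n = (j + 3).choose 2)
    (hl1 : 1 ≤ l) (hl2 : l ≤ j - 1)
    (h1 : l * m + min l t < dJ) (h2 : dJ ≤ (l + 1) * m + min (l + 1) t)
    (hk : k = (j + 2 - l).choose 2) :
    ((d : ℤ) - dJ) * n + dJ - d * k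
      ≥ (d : ℤ) * ((((j + 3).choose 2 : ℕ) : ℤ) - (((j + 2 - l).choose 2 : ℕ) : ℤ))
          - (((l + 1) * m + min (l + 1) t : ℕ) : ℤ) * (((j + 3).choose 2 : ℕ) : ℤ)
          + (((l + 1) * m + min (l + 1) t : ℕ) : ℤ) ∧
    0 < (d : ℤ) * ((((j + 3).choose 2 : ℕ) : ℤ) - (((j + 2 - l).choose 2 : ℕ) : ℤ))
          - (((l + 1) * m + min (l + 1) t : ℕ) : ℤ) * (((j + 3).choose 2 : ℕ) : ℤ)
          + (((l + 1) * m + min (l + 1) t : ℕ) : ℤ) := by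
  rw [← hn, ← hk]
  obtain ⟨a, haj, ha1⟩ : ∃ a, j = l + a ∧ 1 ≤ a := ⟨j - l, by omega, by omega⟩
  have h2N : 2 * n = (j + 3) * (j + 2) := by
    rw [hn, show j + 3 = (j + 2) + 1 by ring, two_choose_two]
  have h2K : 2 * k = (a + 2) * (a + 1) := by
    rw [hk, show j + 2 - l = (a + 1) + 1 by omega, two_choose_two]
  have h2NZ : 2 * (n : ℤ) = ((j : ℤ) + 3) * ((j : ℤ) + 2) := by exact_mod_cast h2N
  have h2KZ : 2 * (k : ℤ) = ((a : ℤ) + 2) * ((a : ℤ) + 1) := by exact_mod_cast h2K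
  have hdZ : (d : ℤ) = m * (j + 1) + t := by exact_mod_cast hd
  have hjZ : (j : ℤ) = l + a := by exact_mod_cast haj
  have hdJZ : (dJ : ℤ) ≤ ((l + 1) * m + min (l + 1) t : ℕ) := by exact_mod_cast h2
  have hn1 : (1 : ℤ) ≤ n := by
    have h0 : 0 < n := hn ▸ Nat.choose_pos (by omega)
    exact_mod_cast h0
  set S : ℤ := ((min (l + 1) t : ℕ) : ℤ) with hS
  rw [hjZ] at h2NZ hdZ
  have hIZ : (((l + 1) * m + min (l + 1) t : ℕ) : ℤ) = ((l : ℤ) + 1) * m + S := by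
    simp only [hS]; push_cast; ring
  constructor
  · nlinarith [mul_nonneg (sub_nonneg.2 hdJZ) (sub_nonneg.2 hn1)]
  · have hS1 : S ≤ (l : ℤ) + 1 := by
      have : min (l + 1) t ≤ l + 1 := min_le_left _ _
      rw [hS]; exact_mod_cast this
    have hS2 : S ≤ (t : ℤ) := by
      have : min (l + 1) t ≤ t := min_le_right _ _
      rw [hS]; exact_mod_cast this
    have hkey := key_pos (l : ℤ) (a : ℤ) (m : ℤ) (t : ℤ) S
      (by exact_mod_cast hl1) (by exact_mod_cast ha1) (by exact_mod_cast hm)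
      (by positivity) hS1 hS2
    rw [hIZ]
    have heq : (m * ((l : ℤ) + a + 1) + t) * (((l : ℤ) + a + 3) * ((l : ℤ) + a + 2)
            - ((a : ℤ) + 2) * ((a : ℤ) + 1))
          - (((l : ℤ) + 1) * m + S) * (((l : ℤ) + a + 3) * ((l : ℤ) + a + 2) - 2)
        = 2 * ((d : ℤ) * ((n : ℤ) - (k : ℤ)) - (((l : ℤ) + 1) * m + S) * n
            + (((l : ℤ) + 1) * m + S)) := by
      rw [hdZ]
      linear_combination (((l : ℤ) + 1) * m + S - ((m : ℤ) * ((l : ℤ) + a + 1) + t)) * h2NZ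
        + ((m : ℤ) * ((l : ℤ) + a + 1) + t) * h2KZ
    linarith [heq ▸ hkey]
end

section
/- Let d ≥ 16 with d written as d = 5m + t, 0 ≤ t < 5 (so m ≥ 3), and for l ∈ {1,2,3,4} set i_l = l·m + min(l,t). Then with n = 18: (i) if 0 < d_J ≤ i_1 and k = 12 then (d-d_J)·18 + d_J - 12·d = 6d - 17·d_J ≥ 13m + 6t - 17·min(1,t) > 0; (ii) if i_1 < d_J ≤ i_2 and k = 9 then 9d - 17·d_J ≥ 11m + 9t - 17·min(2,t) > 0; (iii) if i_2 < d_J ≤ i_3 and k = 5 then 13d - 17·d_J ≥ 14m + 13t - 17·min(3,t) > 0; (iv) if i_3 < d_J ≤ i_4 and k = 3 then 15d - 17·d_J ≥ 7m - 2t > 0. -/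
/-- The four numerical checks for `n = 18`, `d = 5m + t ≥ 16`, `0 ≤ t < 5`,
`i_l = l·m + min l t`: Brenner's strict inequality holds in each range of `d_J`. -/
theorem stmt13 (d m t dJ : ℕ) (hd : 16 ≤ d) (ht : t < 5) (hdm : d = 5 * m + t) :
    (0 < dJ → dJ ≤ m + min 1 t →
      ((d : ℤ) - dJ) * 18 + dJ - 12 * d = 6 * (d : ℤ) - 17 * dJ ∧
      6 * (d : ℤ) - 17 * dJ ≥ 13 * (m : ℤ) + 6 * t - 17 * ((min 1 t : ℕ) : ℤ) ∧
      0 < 13 * (m : ℤ) + 6 * t - 17 * ((min 1 t : ℕ) : ℤ)) ∧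
    (m + min 1 t < dJ → dJ ≤ 2 * m + min 2 t →
      ((d : ℤ) - dJ) * 18 + dJ - 9 * d = 9 * (d : ℤ) - 17 * dJ ∧
      9 * (d : ℤ) - 17 * dJ ≥ 11 * (m : ℤ) + 9 * t - 17 * ((min 2 t : ℕ) : ℤ) ∧
      0 < 11 * (m : ℤ) + 9 * t - 17 * ((min 2 t : ℕ) : ℤ)) ∧
    (2 * m + min 2 t < dJ → dJ ≤ 3 * m + min 3 t →
      ((d : ℤ) - dJ) * 18 + dJ - 5 * d = 13 * (d : ℤ) - 17 * dJ ∧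
      13 * (d : ℤ) - 17 * dJ ≥ 14 * (m : ℤ) + 13 * t - 17 * ((min 3 t : ℕ) : ℤ) ∧
      0 < 14 * (m : ℤ) + 13 * t - 17 * ((min 3 t : ℕ) : ℤ)) ∧
    (3 * m + min 3 t < dJ → dJ ≤ 4 * m + min 4 t →
      ((d : ℤ) - dJ) * 18 + dJ - 3 * d = 15 * (d : ℤ) - 17 * dJ ∧
      15 * (d : ℤ) - 17 * dJ ≥ 7 * (m : ℤ) - 2 * t ∧
      0 < 7 * (m : ℤ) - 2 * (t : ℤ)) := by
  omega
end

section
/- Let j ≥ 3, m ≥ 4, 0 ≤ t < j+1, d = m(j+1)+t, s ≥ 0 with 3s+1 ≤ j+2, n = binomial(j+3,2) + 3s + 1, and i_j = j·m + min(j,t). If i_j < d_J ≤ i_j + ⌈m/2⌉ and k = 2, then (d - d_J)·n + d_J - 2d = d·(binomial(j+3,2) + 3s - 1) - d_J·(binomial(j+3,2) + 3s) > 0. -/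
/-- Case 2.1 of the proof: with `j ≥ 3`, `m ≥ 4`, `0 ≤ t < j+1`, `d = m(j+1)+t`,
`3s+1 ≤ j+2`, `n = (j+3 choose 2) + 3s + 1`, `i_j = jm + min j t`, `e = ⌈m/2⌉`,
`i_j < d_J ≤ i_j + e`, `k = 2`: one has
`(d-d_J)·n + d_J - 2d = d·((j+3 choose 2) + 3s - 1) - d_J·((j+3 choose 2) + 3s) > 0`. -/
theorem stmt14 (j m t d s n dJ : ℕ) (hj : 3 ≤ j) (hm : 4 ≤ m) (ht : t < j + 1)
    (hd : d = m * (j + 1) + t) (hs : 3 * s + 1 ≤ j + 2)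
    (hn : n = (j + 3).choose 2 + 3 * s + 1)
    (h1 : j * m + min j t < dJ) (h2 : dJ ≤ j * m + min j t + (m + 1) / 2) :
    ((d : ℤ) - dJ) * n + dJ - 2 * d
      = (d : ℤ) * ((((j + 3).choose 2 : ℕ) : ℤ) + 3 * s - 1)
        - (dJ : ℤ) * ((((j + 3).choose 2 : ℕ) : ℤ) + 3 * s) ∧
    0 < (d : ℤ) * ((((j + 3).choose 2 : ℕ) : ℤ) + 3 * s - 1)
        - (dJ : ℤ) * ((((j + 3).choose 2 : ℕ) : ℤ) + 3 * s) := by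
  have hmin : min j t ≤ t := min_le_right j t
  have hjm : m * (j + 1) = j * m + m := by ring
  have hlt : dJ < d := by omega
  have key : m + 1 ≤ 3 * (d - dJ) := by omega
  have hC : 3 * (j + 1) ≤ (j + 3).choose 2 := by
    rw [Nat.choose_two_right, Nat.le_div_iff_mul_le (by norm_num : 0 < 2)]
    have he : j + 3 - 1 = j + 2 := by omega
    rw [he]
    nlinarith
  constructor
  · subst hn; push_cast; ring
  · have key2 : d < (d - dJ) * ((j + 3).choose 2 + 3 * s) := by
      have h3 : (m + 1) * (j + 1) ≤ 3 * (d - dJ) * (j + 1) :=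
        Nat.mul_le_mul_right _ key
      nlinarith [Nat.mul_le_mul (le_refl (d - dJ)) hC]
    have hcast : ((d : ℤ) - dJ) * (((j + 3).choose 2 : ℕ) + 3 * s) - d
        = (d : ℤ) * ((((j + 3).choose 2 : ℕ) : ℤ) + 3 * s - 1)
        - (dJ : ℤ) * ((((j + 3).choose 2 : ℕ) : ℤ) + 3 * s) := by ring
    rw [← hcast]
    zify [hlt.le] at key2
    push_cast at key2 ⊢
    linarith
end

section
/- Let j ≥ 3, m ≥ 4, 0 ≤ t < j+1, d = m(j+1)+t, s ≥ 0, n = binomial(j+3,2) + 3s + 1, and i_{j-1} = (j-1)m + min(j-1,t), i_j = jm + min(j,t). If i_{j-1} + ⌈m/2⌉ < d_J ≤ i_j and k = 4, then (d - d_J)·n + d_J - 4d ≥ (m(j+1)+t)·(binomial(j+3,2)+3s-3) - (mj+t)·(binomial(j+3,2)+3s) = (1/2)·((m-3)·j·(j-1) + 3j·(j-3)) + 3(j-t) + 3ms > 0. -/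
/-- Case 2.1 of the proof, range `i_{j-1} + ⌈m/2⌉ < d_J ≤ i_j`, `k = 4`: with `j ≥ 3`,
`m ≥ 4`, `0 ≤ t < j+1`, `d = m(j+1)+t`, `n = (j+3 choose 2) + 3s + 1`, one has
`(d-d_J)·n + d_J - 4d ≥ (m(j+1)+t)·((j+3 choose 2)+3s-3) - (mj+t)·((j+3 choose 2)+3s)
  = (1/2)·((m-3)·j·(j-1) + 3j·(j-3)) + 3(j-t) + 3ms > 0`. -/
theorem stmt15 (j m t d s n dJ : ℕ) (hj : 3 ≤ j) (hm : 4 ≤ m) (ht : t < j + 1)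
    (hd : d = m * (j + 1) + t)
    (hn : n = (j + 3).choose 2 + 3 * s + 1)
    (h1 : (j - 1) * m + min (j - 1) t + (m + 1) / 2 < dJ)
    (h2 : dJ ≤ j * m + min j t) :
    ((d : ℚ) - dJ) * n + dJ - 4 * d
      ≥ ((m : ℚ) * ((j : ℚ) + 1) + t) * ((((j + 3).choose 2 : ℕ) : ℚ) + 3 * s - 3)
        - ((m : ℚ) * j + t) * ((((j + 3).choose 2 : ℕ) : ℚ) + 3 * s) ∧
    ((m : ℚ) * ((j : ℚ) + 1) + t) * ((((j + 3).choose 2 : ℕ) : ℚ) + 3 * s - 3)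
        - ((m : ℚ) * j + t) * ((((j + 3).choose 2 : ℕ) : ℚ) + 3 * s)
      = (1 / 2) * (((m : ℚ) - 3) * j * ((j : ℚ) - 1) + 3 * j * ((j : ℚ) - 3))
        + 3 * ((j : ℚ) - t) + 3 * (m : ℚ) * s ∧
    0 < (1 / 2) * (((m : ℚ) - 3) * j * ((j : ℚ) - 1) + 3 * j * ((j : ℚ) - 3))
        + 3 * ((j : ℚ) - t) + 3 * (m : ℚ) * s := by
  have htj : t ≤ j := Nat.lt_succ_iff.mp ht
  have hmin : min j t = t := min_eq_right htj
  rw [hmin] at h2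
  have hC : (((j + 3).choose 2 : ℕ) : ℚ) = ((j : ℚ) + 3) * ((j : ℚ) + 2) / 2 := by
    rw [Nat.cast_choose_two]; push_cast; ring
  have hdJ : (dJ : ℚ) ≤ (j : ℚ) * m + t := by exact_mod_cast h2
  have hnQ : (n : ℚ) = ((j : ℚ) + 3) * ((j : ℚ) + 2) / 2 + 3 * s + 1 := by
    rw [hn]; push_cast [← hC]; ring
  have hdQ : (d : ℚ) = (m : ℚ) * ((j : ℚ) + 1) + t := by rw [hd]; push_cast; ring
  have hjQ : (3 : ℚ) ≤ j := by exact_mod_cast hj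
  have hmQ : (4 : ℚ) ≤ m := by exact_mod_cast hm
  have htQ : (t : ℚ) ≤ j := by exact_mod_cast htj
  have hsQ : (0 : ℚ) ≤ s := by positivity
  refine ⟨?_, ?_, ?_⟩
  · rw [hC, hnQ, hdQ]
    nlinarith [mul_nonneg (sub_nonneg.mpr hdJ)
      (by nlinarith : (0:ℚ) ≤ ((j : ℚ) + 3) * ((j : ℚ) + 2) / 2 + 3 * s),
      sq_nonneg ((j:ℚ) - 3)]
  · rw [hC]; ring
  · nlinarith [sq_nonneg ((j:ℚ) - 3), mul_nonneg (sub_nonneg.mpr hmQ) hsQ]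
end

section
/- Let N ≥ 4, d ≥ 1, and N+1 ≤ n ≤ binomial(d+2,2) + N - 2, and let E = E_{d,n} be a stable syzygy bundle on ℙ^N fitting into 0 → E → O(-d)^n → O → 0. Assuming h^0(E) = 0, h^1(E) = 1, h^2(E) = h^3(E) = 0, h^0(E(d)) = 0, h^1(E(d)) = binomial(N+d,d) - n, h^2(E(d)) = h^3(E(d)) = 0, and h^0(E ⊗ E^∨) = 1 (simplicity), the long exact sequence of 0 → E → E(d)^n → E ⊗ E^∨ → 0 gives ext^1(E,E) = h^1(E ⊗ E^∨) = n·binomial(N+d,N) - n² and ext^2(E,E) = h^2(E ⊗ E^∨) = 0. -/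
/-- Dimension count for the moduli space: given the long exact cohomology sequence
`0 → H⁰E → H⁰(E(d))ⁿ → H⁰F → H¹E → H¹(E(d))ⁿ → H¹F → H²E → H²(E(d))ⁿ → H²F → H³E → H³(E(d))ⁿ`
(`F = E ⊗ E^∨`), with `h⁰E = 0`, `h¹E = 1`, `h²E = h³E = 0`, `h⁰(E(d)) = 0`,
`h¹(E(d)) = (N+d choose N) - n`, `h²(E(d)) = h³(E(d)) = 0`, and `h⁰F = 1` (simplicity),
one gets `ext¹(E,E) = h¹F = n·(N+d choose N) - n²` and `ext²(E,E) = h²F = 0`. -/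
theorem stmt18 (K : Type) [Field K] (N n d : ℕ)
    (hN : 4 ≤ N) (hd : 1 ≤ d) (hn1 : N + 1 ≤ n) (hn2 : n ≤ (d + 2).choose 2 + N - 2)
    (E0 E1 E2 E3 D0 D1 D2 D3 F0 F1 F2 F3 : Type)
    [AddCommGroup E0] [Module K E0] [AddCommGroup E1] [Module K E1]
    [AddCommGroup E2] [Module K E2] [AddCommGroup E3] [Module K E3]
    [AddCommGroup D0] [Module K D0] [AddCommGroup D1] [Module K D1]
    [AddCommGroup D2] [Module K D2] [AddCommGroup D3] [Module K D3]
    [AddCommGroup F0] [Module K F0] [AddCommGroup F1] [Module K F1]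
    [AddCommGroup F2] [Module K F2] [AddCommGroup F3] [Module K F3]
    [FiniteDimensional K E0] [FiniteDimensional K E1] [FiniteDimensional K E2]
    [FiniteDimensional K E3] [FiniteDimensional K D0] [FiniteDimensional K D1]
    [FiniteDimensional K D2] [FiniteDimensional K D3] [FiniteDimensional K F0]
    [FiniteDimensional K F1] [FiniteDimensional K F2] [FiniteDimensional K F3]
    (α0 : E0 →ₗ[K] D0) (β0 : D0 →ₗ[K] F0) (γ0 : F0 →ₗ[K] E1)
    (α1 : E1 →ₗ[K] D1) (β1 : D1 →ₗ[K] F1) (γ1 : F1 →ₗ[K] E2)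
    (α2 : E2 →ₗ[K] D2) (β2 : D2 →ₗ[K] F2) (γ2 : F2 →ₗ[K] E3)
    (α3 : E3 →ₗ[K] D3)
    (hinj : Function.Injective α0)
    (e1 : Function.Exact α0 β0) (e2 : Function.Exact β0 γ0)
    (e3 : Function.Exact γ0 α1) (e4 : Function.Exact α1 β1)
    (e5 : Function.Exact β1 γ1) (e6 : Function.Exact γ1 α2)
    (e7 : Function.Exact α2 β2) (e8 : Function.Exact β2 γ2)
    (e9 : Function.Exact γ2 α3)
    (hE0 : Module.finrank K E0 = 0) (hE1 : Module.finrank K E1 = 1)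
    (hE2 : Module.finrank K E2 = 0) (hE3 : Module.finrank K E3 = 0)
    (hD0 : Module.finrank K D0 = 0)
    (hD1 : Module.finrank K D1 = n * ((N + d).choose N - n))
    (hD2 : Module.finrank K D2 = 0) (hD3 : Module.finrank K D3 = 0)
    (hF0 : Module.finrank K F0 = 1) :
    Module.finrank K F1 = n * (N + d).choose N - n ^ 2 ∧
    Module.finrank K F2 = 0 := by
  have hD0' : Subsingleton D0 := (Module.finrank_zero_iff (R := K)).mp hD0
  have hD2' : Subsingleton D2 := (Module.finrank_zero_iff (R := K)).mp hD2
  have hE2' : Subsingleton E2 := (Module.finrank_zero_iff (R := K)).mp hE2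
  have hE3' : Subsingleton E3 := (Module.finrank_zero_iff (R := K)).mp hE3
  -- F2 = 0
  have hγ2inj : Function.Injective γ2 := by
    rw [← LinearMap.ker_eq_bot, LinearMap.exact_iff.mp e8]
    apply le_antisymm _ bot_le
    intro x hx
    obtain ⟨y, rfl⟩ := hx
    have : y = 0 := Subsingleton.elim y 0
    simp [this]
  have hF2 : Module.finrank K F2 = 0 := by
    have := LinearMap.finrank_le_finrank_of_injective hγ2inj
    omega
  -- γ0 is injective
  have hγ0inj : Function.Injective γ0 := by
    rw [← LinearMap.ker_eq_bot, LinearMap.exact_iff.mp e2]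
    apply le_antisymm _ bot_le
    intro x hx
    obtain ⟨y, rfl⟩ := hx
    have : y = 0 := Subsingleton.elim y 0
    simp [this]
  -- γ0 surjective since dims equal
  have hγ0surj : Function.Surjective γ0 := by
    have h := (LinearMap.injective_iff_surjective_of_finrank_eq_finrank
      (f := γ0) (by rw [hF0, hE1])).mp hγ0inj
    exact h
  -- α1 = 0 hence ker β1 = ⊥
  have hβ1inj : Function.Injective β1 := by
    rw [← LinearMap.ker_eq_bot, LinearMap.exact_iff.mp e4]
    apply le_antisymm _ bot_le
    intro x hx
    obtain ⟨y, rfl⟩ := hx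
    obtain ⟨z, rfl⟩ := hγ0surj y
    have : α1 (γ0 z) = 0 := (e3 (γ0 z)).mpr ⟨z, rfl⟩
    simpa using this
  -- β1 surjective: ker γ1 = ⊤ since E2 trivial
  have hβ1surj : Function.Surjective β1 := by
    intro y
    have : γ1 y = 0 := Subsingleton.elim _ _
    exact (e5 y).mp this
  have hF1 : Module.finrank K F1 = Module.finrank K D1 :=
    (LinearEquiv.ofBijective β1 ⟨hβ1inj, hβ1surj⟩).finrank_eq.symm
  refine ⟨?_, hF2⟩
  rw [hF1, hD1, Nat.mul_sub, sq]
end
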